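/- Let f : ℝⁿ → ℝ be a function and c ∈ ℝ. Let A be an n×n real diagonal matrix whose diagonal entries are positive and pairwise distinct, and assume that no element of X_c^{∞,+} is an eigenvector of A. Then there exist α, β ∈ (0,1), R > 0 and ε > 0 such that for every x ∈ ℝⁿ with ‖x‖ > R and |f(x) − c| < ε one has α < ⟨Ax/‖Ax‖, x/‖x‖⟩ < β. -/

import Mathlib

open Filter Topology
open scoped RealInnerProductSpace

noncomputable def matApply {n : ℕ} (A : Matrix (Fin n) (Fin n) ℝ)
    (x : EuclideanSpace ℝ (Fin n)) : EuclideanSpace ℝ (Fin n) :=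
  (EuclideanSpace.equiv (Fin n) ℝ).symm (A.mulVec (EuclideanSpace.equiv (Fin n) ℝ x))

def dirsAtInfinity {n : ℕ} (f : EuclideanSpace ℝ (Fin n) → ℝ) (c : ℝ) :
    Set (EuclideanSpace ℝ (Fin n)) :=
  {u | ‖u‖ = 1 ∧ ∃ x : ℕ → EuclideanSpace ℝ (Fin n),
    Tendsto (fun k => ‖x k‖) atTop atTop ∧
    Tendsto (fun k => (‖x k‖)⁻¹ • x k) atTop (𝓝 u) ∧
    Tendsto (fun k => f (x k)) atTop (𝓝 c)}


/-!
`⟪Ax/‖Ax‖, x/‖x‖⟫` is the cosine of the angle between `Ax` and `x`. It depends only on the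
direction `x/‖x‖` and is continuous in it. As `‖x‖ → ∞` and `f x → c`, the directions
accumulate on a compact set `C` of unit vectors contained in `X_c^{∞,+}`. On `C` the cosine
lies in `(0, 1)`: it is positive because `A` is positive definite, and it is not `1` because
no point of `C` is an eigenvector. By compactness it lies in some `[α', β'] ⊂ (0, 1)` on `C`,
hence eventually in a slightly larger open interval.
-/

open Set InnerProductGeometry Real

lemma IsCompact.eventually_mem_of_forall_mapClusterPt_mem {X ι : Type*} [TopologicalSpace X]
    {K U : Set X} {l : Filter ι} {u : ι → X} (hK : IsCompact K) (hu : ∀ᶠ x in l, u x ∈ K)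
    (hU : IsOpen U) (h : ∀ v, MapClusterPt v l u → v ∈ U) : ∀ᶠ x in l, u x ∈ U := by
  by_contra hnot
  obtain ⟨v, hv, hvl⟩ := (hK.diff hU).exists_mapClusterPt_of_frequently
    ((not_eventually.1 hnot).and_eventually hu |>.mono fun x hx => ⟨hx.2, hx.1⟩)
  exact hv.2 (h v hvl)

lemma exists_Ioo_superset_of_isCompact_subset_Ioo {K : Set ℝ} {a b : ℝ} (hab : a < b)
    (hK : IsCompact K) (hKab : K ⊆ Ioo a b) :
    ∃ α β, α ∈ Ioo a b ∧ β ∈ Ioo a b ∧ K ⊆ Ioo α β := by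
  -- the midpoint only makes the set nonempty, so that it has a least and a greatest element
  set K' := insert ((a + b) / 2) K
  have hK' : IsCompact K' := hK.insert _
  have hK'ab : K' ⊆ Ioo a b := insert_subset ⟨by linarith, by linarith⟩ hKab
  have hne : K'.Nonempty := insert_nonempty _ _
  obtain ⟨hpa, hpb⟩ := hK'ab (hK'.sInf_mem hne)
  obtain ⟨hqa, hqb⟩ := hK'ab (hK'.sSup_mem hne)
  refine ⟨(a + sInf K') / 2, (sSup K' + b) / 2, ⟨by linarith, by linarith⟩,
    ⟨by linarith, by linarith⟩, fun x hx => ⟨?_, ?_⟩⟩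
  · linarith [csInf_le hK'.bddBelow (mem_insert_of_mem _ hx)]
  · linarith [le_csSup hK'.bddAbove (mem_insert_of_mem _ hx)]

lemma real_inner_inv_norm_smul_eq_cos_angle {V : Type*} [NormedAddCommGroup V]
    [InnerProductSpace ℝ V] (x y : V) : ⟪‖x‖⁻¹ • x, ‖y‖⁻¹ • y⟫ = cos (angle x y) := by
  rw [cos_angle, real_inner_smul_left, real_inner_smul_right]
  field_simp

section AngleToImage

variable {E : Type*} [NormedAddCommGroup E] [InnerProductSpace ℝ E] (T : E →L[ℝ] E)

lemma angle_apply_normalize (x : E) :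
    angle (T (NormedSpace.normalize x)) (NormedSpace.normalize x) = angle (T x) x := by
  rcases eq_or_ne x 0 with rfl | hx
  · simp
  rw [angle_normalize_right, NormedSpace.normalize, map_smul,
    angle_smul_left_of_pos _ _ (inv_pos.2 (norm_pos_iff.2 hx))]

lemma continuousAt_cos_angle_apply {x : E} (hTx : T x ≠ 0) (hx : x ≠ 0) :
    ContinuousAt (fun w => cos (angle (T w) w)) x :=
  continuous_cos.continuousAt.comp <| (continuousAt_angle (x := (T x, x)) hTx hx).comp
    (T.continuous.prodMk continuous_id).continuousAt (f := fun w => (T w, w))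

variable {T}

lemma cos_angle_apply_pos {x : E} (hTx : 0 < ⟪T x, x⟫) : 0 < cos (angle (T x) x) := by
  have hTx0 : T x ≠ 0 := by rintro h; simp [h] at hTx
  have hx0 : x ≠ 0 := by rintro rfl; simp at hTx
  rw [cos_angle]
  exact div_pos hTx (mul_pos (norm_pos_iff.2 hTx0) (norm_pos_iff.2 hx0))

lemma cos_angle_apply_lt_one {v : E} (hv : ∀ t : ℝ, T v ≠ t • v) :
    cos (angle (T v) v) < 1 := by
  refine (cos_le_one _).lt_of_ne fun h => ?_
  obtain ⟨-, r, hr, hvr⟩ := angle_eq_zero_iff.1 (cos_eq_one_iff_angle_eq_zero.1 h)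
  exact hv r⁻¹ ((eq_inv_smul_iff₀ hr.ne').2 hvr.symm)

theorem exists_eventually_cos_angle_apply_mem_Ioo [FiniteDimensional ℝ E]
    (hT : ∀ x ≠ 0, 0 < ⟪T x, x⟫) {l : Filter E} (hl : ∀ᶠ x in l, x ≠ 0)
    (heig : ∀ v, ‖v‖ = 1 → MapClusterPt v l NormedSpace.normalize → ∀ t : ℝ, T v ≠ t • v) :
    ∃ α β, α ∈ Ioo (0 : ℝ) 1 ∧ β ∈ Ioo (0 : ℝ) 1 ∧
      ∀ᶠ x in l, cos (angle (T x) x) ∈ Ioo α β := by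
  set C := {v | MapClusterPt v l NormedSpace.normalize}
  have hsphere : ∀ᶠ x in l, NormedSpace.normalize x ∈ Metric.sphere (0 : E) 1 :=
    hl.mono fun x hx => by simpa using NormedSpace.norm_normalize_eq_one_iff.2 hx
  have hC1 : ∀ v ∈ C, ‖v‖ = 1 := fun v hv => by
    simpa using Metric.isClosed_sphere.mem_of_mapClusterPt hv hsphere
  have hC0 : ∀ v ∈ C, v ≠ 0 := fun v hv => norm_ne_zero_iff.1 (by simp [hC1 v hv])
  have hC : IsCompact C := (isCompact_sphere (0 : E) 1).of_isClosed_subset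
    isClosed_setOfPred_clusterPt fun v hv => by simpa using hC1 v hv
  have hcont : ContinuousOn (fun w => cos (angle (T w) w)) {w | w ≠ 0} := fun w hw =>
    (continuousAt_cos_angle_apply T (fun h => by simpa [h] using hT w hw) hw).continuousWithinAt
  obtain ⟨α, β, hα, hβ, hCαβ⟩ := exists_Ioo_superset_of_isCompact_subset_Ioo one_pos
    (hC.image_of_continuousOn (hcont.mono hC0)) <| image_subset_iff.2 fun v hv =>
      ⟨cos_angle_apply_pos (hT v (hC0 v hv)), cos_angle_apply_lt_one (heig v (hC1 v hv) hv)⟩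
  have hU := hcont.isOpen_inter_preimage isOpen_ne (isOpen_Ioo (a := α) (b := β))
  refine ⟨α, β, hα, hβ, ?_⟩
  filter_upwards [(isCompact_sphere (0 : E) 1).eventually_mem_of_forall_mapClusterPt_mem
    hsphere hU fun v hv => ⟨hC0 v hv, hCαβ (mem_image_of_mem _ hv)⟩] with x hx
  rw [← angle_apply_normalize]
  exact hx.2

end AngleToImage

lemma mem_dirsAtInfinity_of_mapClusterPt {n : ℕ} {f : EuclideanSpace ℝ (Fin n) → ℝ} {c : ℝ}
    {v : EuclideanSpace ℝ (Fin n)} (hv1 : ‖v‖ = 1)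
    (hv : MapClusterPt v (comap (‖·‖) atTop ⊓ comap f (𝓝 c)) NormedSpace.normalize) :
    v ∈ dirsAtInfinity f c := by
  obtain ⟨x, hxv, hx⟩ := hv.exists_seq_tendsto
  rw [tendsto_inf, tendsto_comap_iff, tendsto_comap_iff] at hx
  exact ⟨hv1, x, hx.1, hxv, hx.2⟩

lemma Matrix.PosDef.real_inner_toEuclideanCLM_self_pos {ι : Type*} [Fintype ι] [DecidableEq ι]
    {A : Matrix ι ι ℝ} (hA : A.PosDef) {x : EuclideanSpace ℝ ι} (hx : x ≠ 0) :
    0 < ⟪Matrix.toEuclideanCLM (𝕜 := ℝ) A x, x⟫ := by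
  rw [real_inner_comm, EuclideanSpace.inner_eq_star_dotProduct, dotProduct_comm]
  exact hA.dotProduct_mulVec_pos (by simpa using hx)

theorem statement8_general {n : ℕ} (f : EuclideanSpace ℝ (Fin n) → ℝ) (c : ℝ)
    (dvec : Fin n → ℝ) (hpos : ∀ i, 0 < dvec i)
    (heig : ∀ u ∈ dirsAtInfinity f c, ∀ t : ℝ,
      matApply (Matrix.diagonal dvec) u ≠ t • u) :
    ∃ α β : ℝ, α ∈ Set.Ioo (0:ℝ) 1 ∧ β ∈ Set.Ioo (0:ℝ) 1 ∧
      ∃ R > (0:ℝ), ∃ ε > (0:ℝ), ∀ x : EuclideanSpace ℝ (Fin n),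
        R < ‖x‖ → |f x - c| < ε →
        α < ⟪(‖matApply (Matrix.diagonal dvec) x‖)⁻¹ • matApply (Matrix.diagonal dvec) x,
              (‖x‖)⁻¹ • x⟫ ∧
        ⟪(‖matApply (Matrix.diagonal dvec) x‖)⁻¹ • matApply (Matrix.diagonal dvec) x,
              (‖x‖)⁻¹ • x⟫ < β := by
  have hl : ∀ᶠ x in comap (‖·‖) atTop ⊓ comap f (𝓝 c), x ≠ 0 :=
    ((eventually_gt_atTop 0).comap _).filter_mono inf_le_left |>.mono fun x => norm_pos_iff.1
  -- `matApply A` is `Matrix.toEuclideanCLM A` by definition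
  obtain ⟨α, β, hα, hβ, hev⟩ := exists_eventually_cos_angle_apply_mem_Ioo
    (T := Matrix.toEuclideanCLM (𝕜 := ℝ) (Matrix.diagonal dvec))
    (fun x hx => (Matrix.PosDef.diagonal hpos).real_inner_toEuclideanCLM_self_pos hx) hl
    fun v hv1 hv => heig v (mem_dirsAtInfinity_of_mapClusterPt hv1 hv)
  obtain ⟨⟨R, ε⟩, ⟨hR, hε⟩, hRε⟩ :=
    (((atTop_basis_Ioi' 0).comap _).inf (Metric.nhds_basis_ball.comap f)).eventually_iff.1 hev
  refine ⟨α, β, hα, hβ, R, hR, ε, hε, fun x hxR hxf => ?_⟩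
  rw [real_inner_inv_norm_smul_eq_cos_angle]
  exact hRε ⟨hxR, hxf⟩

/-- Let `f : ℝⁿ → ℝ` and `c ∈ ℝ`.  Let `A` be a diagonal matrix with positive, pairwise
distinct diagonal entries such that no element of `X_c^{∞,+}` is an eigenvector of `A`.
Then there are `α, β ∈ (0,1)`, `R > 0` and `ε > 0` such that
`α < ⟨Ax/‖Ax‖, x/‖x‖⟩ < β` whenever `‖x‖ > R` and `|f(x) − c| < ε`. -/
theorem statement8 {n : ℕ} (f : EuclideanSpace ℝ (Fin n) → ℝ) (c : ℝ)
    (dvec : Fin n → ℝ) (hpos : ∀ i, 0 < dvec i) (hinj : Function.Injective dvec)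
    (heig : ∀ u ∈ dirsAtInfinity f c, ∀ t : ℝ,
      matApply (Matrix.diagonal dvec) u ≠ t • u) :
    ∃ α β : ℝ, α ∈ Set.Ioo (0:ℝ) 1 ∧ β ∈ Set.Ioo (0:ℝ) 1 ∧
      ∃ R > (0:ℝ), ∃ ε > (0:ℝ), ∀ x : EuclideanSpace ℝ (Fin n),
        R < ‖x‖ → |f x - c| < ε →
        α < ⟪(‖matApply (Matrix.diagonal dvec) x‖)⁻¹ • matApply (Matrix.diagonal dvec) x,
              (‖x‖)⁻¹ • x⟫ ∧
        ⟪(‖matApply (Matrix.diagonal dvec) x‖)⁻¹ • matApply (Matrix.diagonal dvec) x,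
              (‖x‖)⁻¹ • x⟫ < β :=
  statement8_general f c dvec hpos heig
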